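/- arXiv:1405.6767 — 2 statements merged into one kernel-verified Lean document; each statement's English description precedes it below -/
import Mathlib

section
/- The map ψ: H⊗H → H⊗H defined by ψ(a⊗c) = α²(a₂₁) ⊗ (B(a₂₂)α⁻²(c))·A(S⁻¹(a₁)) satisfies the multiplicativity axiom of a monoidal Hom-entwining structure: writing ψ(a⊗c) = _ψa ⊗ c^ψ, one has _ψ(ab)⊗c^ψ = _φa·_ψb ⊗ α(α⁻¹(c)^{ψφ}) for all a,b,c ∈ H. -/
/-
Expand `ψ(xy ⊗ c)` using `Δ(xy) = Δ(x)Δ(y)`, and expand the right-hand side by applying the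
formula for `ψ` twice. Both become sums over the same Sweedler indices and agree term by term:
`α`, `A` and `B` are multiplicative, `S⁻¹` is anti-multiplicative, and Hom-associativity
rebrackets the second tensor factor.

The one step that is not formal bookkeeping is `S(ab) = S(b)S(a)`. Evaluate the pairing
`(u ⊗ v ⊗ w) ⊗ (u' ⊗ v' ⊗ w') ↦ S(uu')((vv')(S(w')S(w)))` on both sides of Hom-coassociativity
`a₁ ⊗ a₂₁ ⊗ a₂₂ = α(a₁₁) ⊗ a₁₂ ⊗ α⁻¹(a₂)`, written out for `a` and for `b`. The antipode axioms
reduce one side to `S(ab)` and the other to `S(b)S(a)`.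
-/

open TensorProduct

/-- A monoidal Hom-Hopf algebra (with bijective antipode) over a field `k`. -/
structure HomHopf (k : Type*) [Field k] (H : Type*) [AddCommGroup H] [Module k H] where
  mul : H →ₗ[k] H →ₗ[k] H
  one : H
  a : H ≃ₗ[k] H
  comul : H →ₗ[k] H ⊗[k] H
  counit : H →ₗ[k] k
  S : H ≃ₗ[k] H
  hom_assoc : ∀ x y z : H, mul (a x) (mul y z) = mul (mul x y) (a z)
  a_mul : ∀ x y : H, a (mul x y) = mul (a x) (a y)
  mul_one' : ∀ x : H, mul x one = a x
  one_mul' : ∀ x : H, mul one x = a x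
  a_one : a one = one
  hom_coassoc : (TensorProduct.map a.symm.toLinearMap comul).comp comul
      = (TensorProduct.assoc k H H H).toLinearMap.comp
          ((TensorProduct.map comul a.symm.toLinearMap).comp comul)
  comul_a : ∀ x : H, comul (a x) = TensorProduct.map a.toLinearMap a.toLinearMap (comul x)
  counit_comul : ∀ x : H,
    (TensorProduct.lid k H) ((TensorProduct.map counit LinearMap.id) (comul x)) = a.symm x
  comul_counit : ∀ x : H,
    (TensorProduct.rid k H) ((TensorProduct.map LinearMap.id counit) (comul x)) = a.symm x
  counit_a : ∀ x : H, counit (a x) = counit x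
  comul_mul : ∀ x y : H, comul (mul x y)
      = (TensorProduct.map (TensorProduct.lift mul) (TensorProduct.lift mul))
          ((TensorProduct.tensorTensorTensorComm k H H H H) (comul x ⊗ₜ[k] comul y))
  comul_one : comul one = one ⊗ₜ[k] one
  counit_mul : ∀ x y : H, counit (mul x y) = counit x * counit y
  counit_one : counit one = 1
  S_a : ∀ x : H, S (a x) = a (S x)
  antipode_left : ∀ x : H,
    (TensorProduct.lift mul) ((TensorProduct.map S.toLinearMap LinearMap.id) (comul x))
      = counit x • one
  antipode_right : ∀ x : H,
    (TensorProduct.lift mul) ((TensorProduct.map LinearMap.id S.toLinearMap) (comul x))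
      = counit x • one

/-- A monoidal Hom-Hopf algebra automorphism. -/
structure IsHomHopfAuto {k : Type*} [Field k] {H : Type*} [AddCommGroup H] [Module k H]
    (HH : HomHopf k H) (f : H ≃ₗ[k] H) : Prop where
  map_mul : ∀ x y : H, f (HH.mul x y) = HH.mul (f x) (f y)
  map_one : f HH.one = HH.one
  map_comul : ∀ x : H, HH.comul (f x)
      = TensorProduct.map f.toLinearMap f.toLinearMap (HH.comul x)
  map_counit : ∀ x : H, HH.counit (f x) = HH.counit x
  map_a : ∀ x : H, f (HH.a x) = HH.a (f x)

/-- A left-right (A,B)-Yetter-Drinfeld Hom-module over `HH`. -/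
structure YDModule {k : Type*} [Field k] {H : Type*} [AddCommGroup H] [Module k H]
    (HH : HomHopf k H) (A B : H ≃ₗ[k] H)
    (M : Type*) [AddCommGroup M] [Module k M] where
  act : H →ₗ[k] M →ₗ[k] M
  coact : M →ₗ[k] M ⊗[k] H
  mu : M ≃ₗ[k] M
  hom_act : ∀ (h g : H) (m : M), act (HH.a h) (act g m) = act (HH.mul h g) (mu m)
  mu_act : ∀ (h : H) (m : M), mu (act h m) = act (HH.a h) (mu m)
  one_act : ∀ m : M, act HH.one m = mu m
  hom_coact : (TensorProduct.map mu.symm.toLinearMap HH.comul).comp coact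
      = (TensorProduct.assoc k M H H).toLinearMap.comp
          ((TensorProduct.map coact HH.a.symm.toLinearMap).comp coact)
  coact_mu : ∀ m : M, coact (mu m)
      = TensorProduct.map mu.toLinearMap HH.a.toLinearMap (coact m)
  coact_counit : ∀ m : M,
    (TensorProduct.rid k M) ((TensorProduct.map LinearMap.id HH.counit) (coact m)) = mu.symm m
  compat : ∀ (h : H) (m : M) (n : ℕ) (h1 h2 : Fin n → H),
      HH.comul h = ∑ i, h1 i ⊗ₜ[k] h2 i →
      ∀ (p : ℕ) (h21 h22 : Fin n → Fin p → H),
      (∀ i, HH.comul (h2 i) = ∑ j, h21 i j ⊗ₜ[k] h22 i j) →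
      ∀ (q : ℕ) (m0 : Fin q → M) (m1 : Fin q → H),
      coact m = ∑ l, m0 l ⊗ₜ[k] m1 l →
      coact (act h m) = ∑ i, ∑ j, ∑ l,
        act (HH.a (h21 i j)) (m0 l) ⊗ₜ[k]
          HH.mul (HH.mul (B (h22 i j)) (HH.a.symm (m1 l))) (A (HH.S.symm (h1 i)))

theorem Finset.sum_equivFin_symm {α β : Type*} [AddCommMonoid β] (s : Finset α) (g : α → β) :
    ∑ j, g (s.equivFin.symm j) = ∑ i ∈ s, g i := by
  rw [Equiv.sum_comp s.equivFin.symm (fun i : s => g i), Finset.sum_coe_sort]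

namespace TensorProduct

variable {R M N ι : Type*} [CommSemiring R] [AddCommMonoid M] [AddCommMonoid N]
  [Module R M] [Module R N]

theorem exists_finset_family (s : Finset ι) (t : ι → M ⊗[R] N) :
    ∃ (u : Finset (M × N)) (f : ι → M × N → M), ∀ i ∈ s, t i = ∑ q ∈ u, f i q ⊗ₜ[R] q.2 := by
  classical
  choose S hS using fun i => exists_finset (t i)
  refine ⟨s.biUnion S, fun i q => if q ∈ S i then q.1 else 0, fun i hi => ?_⟩
  simp only [ite_tmul]
  rw [Finset.sum_ite_mem, Finset.inter_eq_right.2 (Finset.subset_biUnion_of_mem S hi), hS i]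

end TensorProduct

namespace HomHopf

variable {k H : Type*} [Field k] [AddCommGroup H] [Module k H] (HH : HomHopf k H)
  {α β : Type*}

theorem a_symm_mul (x y : H) :
    HH.a.symm (HH.mul x y) = HH.mul (HH.a.symm x) (HH.a.symm y) :=
  HH.a.injective (by rw [HH.a_mul]; simp)

theorem a_symm_one : HH.a.symm HH.one = HH.one :=
  HH.a.injective (by rw [HH.a.apply_symm_apply, HH.a_one])

theorem S_a_symm (x : H) : HH.S (HH.a.symm x) = HH.a.symm (HH.S x) :=
  HH.a.injective (by rw [← HH.S_a, HH.a.apply_symm_apply, HH.a.apply_symm_apply])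

theorem mul_smul_one (r : k) (x : H) : HH.mul x (r • HH.one) = r • HH.a x := by
  rw [map_smul, HH.mul_one']

theorem smul_one_mul (r : k) (x : H) : HH.mul (r • HH.one) x = r • HH.a x := by
  rw [map_smul, LinearMap.smul_apply, HH.one_mul']

theorem mul_mul_mul_comm_a (a b c d : H) :
    HH.mul (HH.mul a b) (HH.mul c d)
      = HH.mul (HH.mul a (HH.a.symm (HH.mul b c))) (HH.a d) := by
  calc HH.mul (HH.mul a b) (HH.mul c d)
      = HH.mul (HH.mul (HH.a.symm (HH.mul a b)) c) (HH.a d) := by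
        rw [← HH.hom_assoc, HH.a.apply_symm_apply]
    _ = HH.mul (HH.mul a (HH.a.symm (HH.mul b c))) (HH.a d) := by
        congr 2
        simpa [HH.a_symm_mul] using
          (HH.hom_assoc (HH.a.symm a) (HH.a.symm b) (HH.a.symm c)).symm

variable {s : Finset α} {t : Finset β} {x1 x2 : α → H} {y1 y2 : β → H}

theorem comul_mul_eq_sum {x y : H} (hx : HH.comul x = ∑ i ∈ s, x1 i ⊗ₜ[k] x2 i)
    (hy : HH.comul y = ∑ j ∈ t, y1 j ⊗ₜ[k] y2 j) :
    HH.comul (HH.mul x y)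
      = ∑ ij ∈ s ×ˢ t, HH.mul (x1 ij.1) (y1 ij.2) ⊗ₜ[k] HH.mul (x2 ij.1) (y2 ij.2) := by
  simp only [HH.comul_mul, hx, hy, tmul_sum, sum_tmul, map_sum, tensorTensorTensorComm_tmul,
    map_tmul, lift.tmul, Finset.sum_product]
  exact Finset.sum_comm

theorem sum_counit_smul_left {x : H} (hx : HH.comul x = ∑ i ∈ s, x1 i ⊗ₜ[k] x2 i) :
    ∑ i ∈ s, HH.counit (x1 i) • x2 i = HH.a.symm x := by
  simpa [hx] using HH.counit_comul x

theorem sum_counit_smul_right {x : H} (hx : HH.comul x = ∑ i ∈ s, x1 i ⊗ₜ[k] x2 i) :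
    ∑ i ∈ s, HH.counit (x2 i) • x1 i = HH.a.symm x := by
  simpa [hx] using HH.comul_counit x

theorem sum_S_mul {x : H} (hx : HH.comul x = ∑ i ∈ s, x1 i ⊗ₜ[k] x2 i) :
    ∑ i ∈ s, HH.mul (HH.S (x1 i)) (x2 i) = HH.counit x • HH.one := by
  simpa [hx] using HH.antipode_left x

theorem sum_mul_S {x : H} (hx : HH.comul x = ∑ i ∈ s, x1 i ⊗ₜ[k] x2 i) :
    ∑ i ∈ s, HH.mul (x1 i) (HH.S (x2 i)) = HH.counit x • HH.one := by
  simpa [hx] using HH.antipode_right x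

theorem sum_mul_mul_S_mul_S {x y : H} (hx : HH.comul x = ∑ i ∈ s, x1 i ⊗ₜ[k] x2 i)
    (hy : HH.comul y = ∑ j ∈ t, y1 j ⊗ₜ[k] y2 j) :
    ∑ j ∈ t, ∑ i ∈ s, HH.mul (HH.mul (x1 i) (y1 j)) (HH.mul (HH.S (y2 j)) (HH.S (x2 i)))
      = (HH.counit x * HH.counit y) • HH.one := by
  have inner : ∀ i, ∑ j ∈ t, HH.mul (HH.mul (x1 i) (y1 j)) (HH.mul (HH.S (y2 j)) (HH.S (x2 i)))
      = HH.counit y • HH.a (HH.mul (x1 i) (HH.S (x2 i))) := fun i => by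
    calc _ = ∑ j ∈ t, HH.mul (HH.mul (x1 i) (HH.a.symm (HH.mul (y1 j) (HH.S (y2 j)))))
            (HH.a (HH.S (x2 i))) :=
          Finset.sum_congr rfl fun j _ => HH.mul_mul_mul_comm_a _ _ _ _
      _ = HH.mul (HH.mul (x1 i) (HH.a.symm (∑ j ∈ t, HH.mul (y1 j) (HH.S (y2 j)))))
            (HH.a (HH.S (x2 i))) := by simp only [map_sum, LinearMap.coe_sum, Finset.sum_apply]
      _ = _ := by
          rw [HH.sum_mul_S hy, map_smul, HH.a_symm_one, HH.mul_smul_one, map_smul,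
            LinearMap.smul_apply, HH.a_mul]
  rw [Finset.sum_comm, Finset.sum_congr rfl fun i _ => inner i, ← Finset.smul_sum, ← map_sum,
    HH.sum_mul_S hx, map_smul, HH.a_one, smul_smul, mul_comm]

theorem sum_S_mul_mul_mul {x y : H} (hx : HH.comul x = ∑ i ∈ s, x1 i ⊗ₜ[k] x2 i)
    (hy : HH.comul y = ∑ j ∈ t, y1 j ⊗ₜ[k] y2 j) :
    ∑ j ∈ t, ∑ i ∈ s, HH.mul (HH.S (HH.mul (x1 i) (y1 j))) (HH.mul (x2 i) (y2 j))
      = (HH.counit x * HH.counit y) • HH.one := by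
  rw [← HH.counit_mul, ← HH.sum_S_mul (HH.comul_mul_eq_sum hx hy), Finset.sum_product_right]

theorem hom_coassoc_sum {γ : Type*} {u : Finset γ} {x : H} {x11 x12 : α → β → H}
    {x21 x22 : α → γ → H} (hx : HH.comul x = ∑ i ∈ s, x1 i ⊗ₜ[k] x2 i)
    (hx1 : ∀ i ∈ s, HH.comul (x1 i) = ∑ j ∈ t, x11 i j ⊗ₜ[k] x12 i j)
    (hx2 : ∀ i ∈ s, HH.comul (x2 i) = ∑ j ∈ u, x21 i j ⊗ₜ[k] x22 i j) :
    ∑ i ∈ s, ∑ j ∈ u, x1 i ⊗ₜ[k] (x21 i j ⊗ₜ[k] x22 i j)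
      = ∑ i ∈ s, ∑ j ∈ t, HH.a (x11 i j) ⊗ₜ[k] (x12 i j ⊗ₜ[k] HH.a.symm (x2 i)) := by
  have h := congrArg (map HH.a.toLinearMap LinearMap.id) (LinearMap.congr_fun HH.hom_coassoc x)
  simp only [LinearMap.comp_apply, LinearEquiv.coe_coe, hx, map_sum, map_tmul,
    LinearEquiv.apply_symm_apply, LinearMap.id_apply] at h
  calc _ = ∑ i ∈ s, x1 i ⊗ₜ[k] HH.comul (x2 i) :=
        Finset.sum_congr rfl fun i hi => by rw [hx2 i hi, tmul_sum]
    _ = _ := h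
    _ = _ := Finset.sum_congr rfl fun i hi => by simp [hx1 i hi, sum_tmul]

theorem a_mul_mul_a_symm (x y z : H) :
    HH.mul (HH.a x) (HH.mul y (HH.a.symm z)) = HH.mul (HH.mul x y) z := by
  rw [HH.hom_assoc, HH.a.apply_symm_apply]

def antipodePairing : (H ⊗[k] (H ⊗[k] H)) ⊗[k] (H ⊗[k] (H ⊗[k] H)) →ₗ[k] H :=
  lift HH.mul ∘ₗ
    map (HH.S.toLinearMap ∘ₗ lift HH.mul)
      (lift HH.mul ∘ₗ map (lift HH.mul)
        (lift HH.mul ∘ₗ map HH.S.toLinearMap HH.S.toLinearMap ∘ₗ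
          (TensorProduct.comm k H H).toLinearMap)) ∘ₗ
    map LinearMap.id (tensorTensorTensorComm k H H H H).toLinearMap ∘ₗ
    (tensorTensorTensorComm k H (H ⊗[k] H) H (H ⊗[k] H)).toLinearMap

@[simp]
theorem antipodePairing_tmul (u v w u' v' w' : H) :
    HH.antipodePairing ((u ⊗ₜ[k] (v ⊗ₜ[k] w)) ⊗ₜ[k] (u' ⊗ₜ[k] (v' ⊗ₜ[k] w')))
      = HH.mul (HH.S (HH.mul u u')) (HH.mul (HH.mul v v') (HH.mul (HH.S w') (HH.S w))) := by
  simp [antipodePairing]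

variable {γ δ : Type*} {a b : H} {t' : Finset δ} {a1 a2 : α → H} {b1 b2 : γ → H}
  {s' : Finset γ}

theorem S_mul_eq_antipodePairing {a21 a22 : α → β → H} {b21 b22 : γ → δ → H}
    (ha : HH.comul a = ∑ i ∈ s, a1 i ⊗ₜ[k] a2 i)
    (ha2 : ∀ i ∈ s, HH.comul (a2 i) = ∑ j ∈ t, a21 i j ⊗ₜ[k] a22 i j)
    (hb : HH.comul b = ∑ i ∈ s', b1 i ⊗ₜ[k] b2 i)
    (hb2 : ∀ i ∈ s', HH.comul (b2 i) = ∑ j ∈ t', b21 i j ⊗ₜ[k] b22 i j) :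
    HH.S (HH.mul a b) = HH.antipodePairing
      ((∑ i ∈ s, ∑ j ∈ t, a1 i ⊗ₜ[k] (a21 i j ⊗ₜ[k] a22 i j)) ⊗ₜ[k]
        (∑ i ∈ s', ∑ j ∈ t', b1 i ⊗ₜ[k] (b21 i j ⊗ₜ[k] b22 i j))) := by
  symm
  calc _ = ∑ l ∈ s', ∑ i ∈ s, HH.mul (HH.S (HH.mul (a1 i) (b1 l)))
          (∑ m ∈ t', ∑ j ∈ t, HH.mul (HH.mul (a21 i j) (b21 l m))
            (HH.mul (HH.S (b22 l m)) (HH.S (a22 i j)))) := by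
        simp only [sum_tmul, tmul_sum, map_sum, antipodePairing_tmul]
        refine Finset.sum_congr rfl fun l _ => ?_
        exact Finset.sum_comm
    _ = ∑ l ∈ s', ∑ i ∈ s,
          HH.a (HH.S (HH.mul (HH.counit (a2 i) • a1 i) (HH.counit (b2 l) • b1 l))) :=
        Finset.sum_congr rfl fun l hl => Finset.sum_congr rfl fun i hi => by
          rw [HH.sum_mul_mul_S_mul_S (ha2 i hi) (hb2 l hl), HH.mul_smul_one]
          simp [smul_smul, mul_comm]
    _ = HH.a (HH.S (HH.mul (∑ i ∈ s, HH.counit (a2 i) • a1 i)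
          (∑ l ∈ s', HH.counit (b2 l) • b1 l))) := by
        simp only [map_sum, LinearMap.coe_sum, Finset.sum_apply]
    _ = _ := by
        rw [HH.sum_counit_smul_right ha, HH.sum_counit_smul_right hb, ← HH.a_symm_mul,
          HH.S_a_symm, HH.a.apply_symm_apply]

theorem antipodePairing_eq_mul_S {a11 a12 : α → β → H} {b11 b12 : γ → δ → H}
    (ha : HH.comul a = ∑ i ∈ s, a1 i ⊗ₜ[k] a2 i)
    (ha1 : ∀ i ∈ s, HH.comul (a1 i) = ∑ j ∈ t, a11 i j ⊗ₜ[k] a12 i j)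
    (hb : HH.comul b = ∑ i ∈ s', b1 i ⊗ₜ[k] b2 i)
    (hb1 : ∀ i ∈ s', HH.comul (b1 i) = ∑ j ∈ t', b11 i j ⊗ₜ[k] b12 i j) :
    HH.antipodePairing
      ((∑ i ∈ s, ∑ j ∈ t, HH.a (a11 i j) ⊗ₜ[k] (a12 i j ⊗ₜ[k] HH.a.symm (a2 i))) ⊗ₜ[k]
        (∑ i ∈ s', ∑ j ∈ t', HH.a (b11 i j) ⊗ₜ[k] (b12 i j ⊗ₜ[k] HH.a.symm (b2 i))))
      = HH.mul (HH.S b) (HH.S a) := by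
  calc _ = ∑ l ∈ s', ∑ i ∈ s, HH.mul
          (∑ m ∈ t', ∑ j ∈ t,
            HH.mul (HH.S (HH.mul (a11 i j) (b11 l m))) (HH.mul (a12 i j) (b12 l m)))
          (HH.mul (HH.S (b2 l)) (HH.S (a2 i))) := by
        simp only [sum_tmul, tmul_sum, map_sum, antipodePairing_tmul, LinearMap.coe_sum,
          Finset.sum_apply, ← HH.a_mul, HH.S_a, HH.S_a_symm, ← HH.a_symm_mul, HH.a_mul_mul_a_symm]
        refine Finset.sum_congr rfl fun l _ => ?_
        exact Finset.sum_comm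
    _ = ∑ l ∈ s', ∑ i ∈ s,
          HH.a (HH.mul (HH.S (HH.counit (b1 l) • b2 l)) (HH.S (HH.counit (a1 i) • a2 i))) :=
        Finset.sum_congr rfl fun l hl => Finset.sum_congr rfl fun i hi => by
          rw [HH.sum_S_mul_mul_mul (ha1 i hi) (hb1 l hl), HH.smul_one_mul]
          simp [smul_smul]
    _ = HH.a (HH.mul (HH.S (∑ l ∈ s', HH.counit (b1 l) • b2 l))
          (HH.S (∑ i ∈ s, HH.counit (a1 i) • a2 i))) := by
        simp only [map_sum, LinearMap.coe_sum, Finset.sum_apply]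
        exact Finset.sum_comm
    _ = _ := by
        rw [HH.sum_counit_smul_left ha, HH.sum_counit_smul_left hb, HH.S_a_symm, HH.S_a_symm,
          ← HH.a_symm_mul, HH.a.apply_symm_apply]

theorem S_mul (a b : H) : HH.S (HH.mul a b) = HH.mul (HH.S b) (HH.S a) := by
  obtain ⟨s, ha⟩ := exists_finset (HH.comul a)
  obtain ⟨sa1, fa1, ha1⟩ := exists_finset_family s fun q => HH.comul q.1
  obtain ⟨sa2, fa2, ha2⟩ := exists_finset_family s fun q => HH.comul q.2
  obtain ⟨s', hb⟩ := exists_finset (HH.comul b)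
  obtain ⟨sb1, fb1, hb1⟩ := exists_finset_family s' fun q => HH.comul q.1
  obtain ⟨sb2, fb2, hb2⟩ := exists_finset_family s' fun q => HH.comul q.2
  rw [HH.S_mul_eq_antipodePairing ha ha2 hb hb2, HH.hom_coassoc_sum ha ha1 ha2,
    HH.hom_coassoc_sum hb hb1 hb2, HH.antipodePairing_eq_mul_S ha ha1 hb hb1]

theorem S_symm_mul (x y : H) :
    HH.S.symm (HH.mul x y) = HH.mul (HH.S.symm y) (HH.S.symm x) :=
  HH.S.injective (by
    rw [HH.S.apply_symm_apply, HH.S_mul, HH.S.apply_symm_apply, HH.S.apply_symm_apply])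

theorem mul_mul_a_symm_sq_mul (X Y Q P c : H) :
    HH.mul (HH.mul (HH.mul X Y) (HH.a.symm (HH.a.symm c))) (HH.mul Q P)
      = HH.a (HH.mul (HH.mul X (HH.a.symm (HH.a.symm
          (HH.mul (HH.mul Y (HH.a.symm (HH.a.symm (HH.a.symm c)))) Q)))) P) := by
  calc _ = HH.mul (HH.mul (HH.a X) (HH.mul Y (HH.a.symm (HH.a.symm (HH.a.symm c)))))
          (HH.mul Q P) := by rw [HH.hom_assoc, HH.a.apply_symm_apply]
    _ = HH.mul (HH.mul (HH.a X) (HH.a.symm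
          (HH.mul (HH.mul Y (HH.a.symm (HH.a.symm (HH.a.symm c)))) Q))) (HH.a P) :=
        HH.mul_mul_mul_comm_a _ _ _ _
    _ = _ := by rw [HH.a_mul, HH.a_mul, HH.a.apply_symm_apply]

variable (A B : H ≃ₗ[k] H) (psi : H ⊗[k] H →ₗ[k] H ⊗[k] H)

def IsYDEntwiningMap : Prop :=
  ∀ (x c : H) (n : ℕ) (x1 x2 : Fin n → H),
    HH.comul x = ∑ i, x1 i ⊗ₜ[k] x2 i →
    ∀ (p : ℕ) (x21 x22 : Fin n → Fin p → H),
    (∀ i, HH.comul (x2 i) = ∑ j, x21 i j ⊗ₜ[k] x22 i j) →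
    psi (x ⊗ₜ[k] c) = ∑ i, ∑ j,
      HH.a (HH.a (x21 i j)) ⊗ₜ[k]
        HH.mul (HH.mul (B (x22 i j)) (HH.a.symm (HH.a.symm c))) (A (HH.S.symm (x1 i)))

-- `u ⊗ v ↦ _ψx · u ⊗ α(v^ψ)`, so that the multiplicativity axiom reads
-- `ψ(xy ⊗ c) = psiMulLeft x (ψ(y ⊗ α⁻¹c))`.
def psiMulLeft (x : H) : H ⊗[k] H →ₗ[k] H ⊗[k] H :=
  lift (LinearMap.lcomp k (H ⊗[k] H) (psi ∘ₗ TensorProduct.mk k H H x) ∘ₗ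
    (mapBilinear (RingHom.id k) H H H H).flip HH.a.toLinearMap ∘ₗ HH.mul.flip)

variable {HH A B psi}

theorem psiMulLeft_tmul (x u v : H) :
    HH.psiMulLeft psi x (u ⊗ₜ[k] v) = map (HH.mul.flip u) HH.a.toLinearMap (psi (x ⊗ₜ[k] v)) :=
  rfl

theorem IsYDEntwiningMap.apply_tmul_eq_sum (hpsi : HH.IsYDEntwiningMap A B psi) (c : H)
    {x : H} {x21 x22 : α → β → H} (hx : HH.comul x = ∑ i ∈ s, x1 i ⊗ₜ[k] x2 i)
    (hx2 : ∀ i ∈ s, HH.comul (x2 i) = ∑ j ∈ t, x21 i j ⊗ₜ[k] x22 i j) :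
    psi (x ⊗ₜ[k] c) = ∑ i ∈ s, ∑ j ∈ t,
      HH.a (HH.a (x21 i j)) ⊗ₜ[k]
        HH.mul (HH.mul (B (x22 i j)) (HH.a.symm (HH.a.symm c))) (A (HH.S.symm (x1 i))) := by
  rw [hpsi x c _ (fun i => x1 (s.equivFin.symm i)) (fun i => x2 (s.equivFin.symm i))
    (hx.trans (Finset.sum_equivFin_symm s fun i => x1 i ⊗ₜ[k] x2 i).symm) _
    (fun i j => x21 (s.equivFin.symm i) (t.equivFin.symm j))
    (fun i j => x22 (s.equivFin.symm i) (t.equivFin.symm j))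
    (fun i => (hx2 _ (s.equivFin.symm i).2).trans
      (Finset.sum_equivFin_symm t fun j => x21 _ j ⊗ₜ[k] x22 _ j).symm),
    ← Finset.sum_coe_sort s]
  refine Fintype.sum_equiv s.equivFin.symm _ _ fun i => ?_
  rw [← Finset.sum_coe_sort t]
  exact Fintype.sum_equiv t.equivFin.symm _ _ fun _ => rfl

theorem IsYDEntwiningMap.apply_mul_tmul (hpsi : HH.IsYDEntwiningMap A B psi)
    (hA : ∀ x y, A (HH.mul x y) = HH.mul (A x) (A y))
    (hB : ∀ x y, B (HH.mul x y) = HH.mul (B x) (B y)) (x y c : H) :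
    psi (HH.mul x y ⊗ₜ[k] c) = HH.psiMulLeft psi x (psi (y ⊗ₜ[k] HH.a.symm c)) := by
  obtain ⟨sx, hx⟩ := exists_finset (HH.comul x)
  obtain ⟨tx, fx, hx2⟩ := exists_finset_family sx fun q => HH.comul q.2
  obtain ⟨sy, hy⟩ := exists_finset (HH.comul y)
  obtain ⟨ty, fy, hy2⟩ := exists_finset_family sy fun q => HH.comul q.2
  have hxy2 : ∀ q ∈ sx ×ˢ sy, HH.comul (HH.mul q.1.2 q.2.2) = ∑ r ∈ tx ×ˢ ty,
      HH.mul (fx q.1 r.1) (fy q.2 r.2) ⊗ₜ[k] HH.mul r.1.2 r.2.2 := fun q hq =>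
    HH.comul_mul_eq_sum (hx2 _ (Finset.mem_product.1 hq).1) (hy2 _ (Finset.mem_product.1 hq).2)
  rw [hpsi.apply_tmul_eq_sum c (HH.comul_mul_eq_sum hx hy) hxy2, hpsi.apply_tmul_eq_sum _ hy hy2]
  simp only [Finset.sum_product, map_sum, psiMulLeft_tmul, hpsi.apply_tmul_eq_sum _ hx hx2,
    map_tmul, LinearMap.flip_apply, LinearEquiv.coe_coe]
  rw [Finset.sum_comm]
  refine Finset.sum_congr rfl fun l _ => ?_
  simp_rw [Finset.sum_comm (s := tx)]
  rw [Finset.sum_comm]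
  refine Finset.sum_congr rfl fun m _ => Finset.sum_congr rfl fun i _ =>
    Finset.sum_congr rfl fun j _ => ?_
  rw [HH.a_mul, HH.a_mul, hB, HH.S_symm_mul, hA, HH.mul_mul_a_symm_sq_mul]

end HomHopf

/-- The map ψ(a⊗c) = α²(a₂₁) ⊗ (B(a₂₂)α⁻²(c))·A(S⁻¹(a₁)) satisfies the
multiplicativity axiom (2.3) of a monoidal Hom-entwining structure:
_ψ(ab)⊗c^ψ = _φa·_ψb ⊗ α(α⁻¹(c)^{ψφ}). -/
theorem stmt_6 {k : Type*} [Field k] {H : Type*} [AddCommGroup H] [Module k H]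
    (HH : HomHopf k H) (A B : H ≃ₗ[k] H)
    (hA : IsHomHopfAuto HH A) (hB : IsHomHopfAuto HH B)
    (psi : H ⊗[k] H →ₗ[k] H ⊗[k] H)
    (hpsi : ∀ (x c : H) (n : ℕ) (x1 x2 : Fin n → H),
      HH.comul x = ∑ i, x1 i ⊗ₜ[k] x2 i →
      ∀ (p : ℕ) (x21 x22 : Fin n → Fin p → H),
      (∀ i, HH.comul (x2 i) = ∑ j, x21 i j ⊗ₜ[k] x22 i j) →
      psi (x ⊗ₜ[k] c) = ∑ i, ∑ j,
        HH.a (HH.a (x21 i j)) ⊗ₜ[k]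
          HH.mul (HH.mul (B (x22 i j)) (HH.a.symm (HH.a.symm c))) (A (HH.S.symm (x1 i)))) :
    ∀ (x y c : H) (n : ℕ) (u v : Fin n → H),
      psi (y ⊗ₜ[k] HH.a.symm c) = ∑ i, u i ⊗ₜ[k] v i →
      ∀ (p : ℕ) (w z : Fin n → Fin p → H),
      (∀ i, psi (x ⊗ₜ[k] v i) = ∑ j, w i j ⊗ₜ[k] z i j) →
      psi (HH.mul x y ⊗ₜ[k] c) = ∑ i, ∑ j, HH.mul (w i j) (u i) ⊗ₜ[k] HH.a (z i j) := by
  intro x y c n u v hu p w z hw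
  rw [HomHopf.IsYDEntwiningMap.apply_mul_tmul hpsi hA.map_mul hB.map_mul, hu]
  simp [HomHopf.psiMulLeft_tmul, hw]
end

section
/- The braiding c_{M,N}(m⊗n) = ν(n₍₀₎) ⊗ B⁻¹(n₍₁₎)·μ⁻¹(m) is bijective, with inverse c_{M,N}⁻¹(n⊗m) = B⁻¹(S(n₍₁₎))·μ⁻¹(m) ⊗ ν(n₍₀₎). -/
open TensorProduct

/-!
Write `h ▷ m = B⁻¹(h) · μ⁻¹(m)`, so that `c(m ⊗ n) = ν(n₍₀₎) ⊗ n₍₁₎ ▷ m` and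
`c⁻¹(n ⊗ m) = S(n₍₁₎) ▷ m ⊗ ν(n₍₀₎)`. Hom-associativity of the action gives
`a(u) ▷ (h ▷ m) = (u · a⁻¹(h)) ▷ m`, so both composites `c⁻¹c` and `cc⁻¹` are linear
expressions in the iterated coaction `(ρ ⊗ a⁻¹)ρ(n)`. Hom-coassociativity rewrites it as
`(μ⁻¹ ⊗ Δ)ρ(n)`, after which the antipode axioms `S(h₁)h₂ = ε(h)1 = h₁S(h₂)` and the counit
axiom of the coaction collapse both expressions to the identity.
-/
theorem TensorProduct.exists_fin_sum_tmul {R M N : Type*} [CommSemiring R] [AddCommMonoid M]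
    [Module R M] [AddCommMonoid N] [Module R N] (z : M ⊗[R] N) :
    ∃ (q : ℕ) (f : Fin q → M) (g : Fin q → N), z = ∑ i, f i ⊗ₜ[R] g i := by
  obtain ⟨S, rfl⟩ := exists_finset z
  refine ⟨S.card, fun i => (S.equivFin.symm i).1.1, fun i => (S.equivFin.symm i).1.2, ?_⟩
  rw [← Finset.sum_coe_sort S, ← S.equivFin.symm.sum_comp]

section

variable {k : Type*} [Field k] {H : Type*} [AddCommGroup H] [Module k H]
  {M : Type*} [AddCommGroup M] [Module k M] {N : Type*} [AddCommGroup N] [Module k N]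

theorem HomHopf.S_a_symm_s13 (HH : HomHopf k H) (h : H) : HH.S (HH.a.symm h) = HH.a.symm (HH.S h) := by
  rw [LinearEquiv.eq_symm_apply, ← HH.S_a, LinearEquiv.apply_symm_apply]

theorem IsHomHopfAuto.symm {HH : HomHopf k H} {f : H ≃ₗ[k] H} (hf : IsHomHopfAuto HH f) :
    IsHomHopfAuto HH f.symm where
  map_mul x y := by rw [LinearEquiv.symm_apply_eq, hf.map_mul]; simp
  map_one := by rw [LinearEquiv.symm_apply_eq, hf.map_one]
  map_comul x := by
    have h := hf.map_comul (f.symm x)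
    rw [f.apply_symm_apply] at h
    rw [h, ← LinearMap.comp_apply, ← map_comp]
    simp
  map_counit x := by rw [← hf.map_counit, LinearEquiv.apply_symm_apply]
  map_a x := by rw [LinearEquiv.symm_apply_eq, hf.map_a]; simp

theorem IsHomHopfAuto.map_a_symm {HH : HomHopf k H} {f : H ≃ₗ[k] H} (hf : IsHomHopfAuto HH f)
    (x : H) : f (HH.a.symm x) = HH.a.symm (f x) := by
  rw [LinearEquiv.eq_symm_apply, ← hf.map_a, LinearEquiv.apply_symm_apply]

namespace YDModule

variable {HH : HomHopf k H} {A B C D : H ≃ₗ[k] H}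

theorem mu_symm_act (YM : YDModule HH A B M) (h : H) (m : M) :
    YM.mu.symm (YM.act h m) = YM.act (HH.a.symm h) (YM.mu.symm m) := by
  rw [LinearEquiv.symm_apply_eq, YM.mu_act]; simp

theorem act_a_act_mu_symm (YM : YDModule HH A B M) (u h : H) (m : M) :
    YM.act (HH.a u) (YM.mu.symm (YM.act h m)) = YM.act (HH.mul u (HH.a.symm h)) m := by
  rw [mu_symm_act, YM.hom_act, LinearEquiv.apply_symm_apply]

def twistAct (YM : YDModule HH A B M) : H →ₗ[k] M →ₗ[k] M :=
  (YM.act ∘ₗ B.symm.toLinearMap).compl₂ YM.mu.symm.toLinearMap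

theorem twistAct_apply (YM : YDModule HH A B M) (h : H) (m : M) :
    YM.twistAct h m = YM.act (B.symm h) (YM.mu.symm m) := rfl

theorem twistAct_one (YM : YDModule HH A B M) (hB : IsHomHopfAuto HH B) (m : M) :
    YM.twistAct HH.one m = m := by
  rw [twistAct_apply, hB.symm.map_one, YM.one_act, LinearEquiv.apply_symm_apply]

theorem twistAct_a_twistAct (YM : YDModule HH A B M) (hB : IsHomHopfAuto HH B) (u h : H)
    (m : M) : YM.twistAct (HH.a u) (YM.twistAct h m) = YM.twistAct (HH.mul u (HH.a.symm h)) m := by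
  simp only [twistAct_apply]
  rw [hB.symm.map_a, act_a_act_mu_symm, hB.symm.map_mul, hB.symm.map_a_symm]

theorem assoc_map_coact_coact (YN : YDModule HH C D N) (x : N) :
    TensorProduct.assoc k N H H (map YN.coact HH.a.symm.toLinearMap (YN.coact x))
      = map YN.mu.symm.toLinearMap HH.comul (YN.coact x) := by
  simpa using (LinearMap.congr_fun YN.hom_coact x).symm

theorem apply_assoc_map_coact_coact {X : Type*} [AddCommGroup X] [Module k X]
    (YN : YDModule HH C D N) (Φ : N ⊗[k] (H ⊗[k] H) →ₗ[k] X) (ψ : N →ₗ[k] X)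
    (hΦ : ∀ y h, Φ (y ⊗ₜ HH.comul h) = HH.counit h • ψ y) (x : N) :
    Φ (TensorProduct.assoc k N H H (map YN.coact HH.a.symm.toLinearMap (YN.coact x)))
      = ψ (YN.mu.symm (YN.mu.symm x)) := by
  have hmaps : Φ ∘ₗ map YN.mu.symm.toLinearMap HH.comul
      = ψ ∘ₗ YN.mu.symm.toLinearMap ∘ₗ (TensorProduct.rid k N).toLinearMap
        ∘ₗ map LinearMap.id HH.counit :=
    ext' fun y h => by simp [hΦ]
  rw [assoc_map_coact_coact, ← LinearMap.comp_apply, hmaps]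
  simp only [LinearMap.comp_apply, LinearEquiv.coe_coe, YN.coact_counit]

variable (YM : YDModule HH A B M) (YN : YDModule HH C D N)

def braiding : M ⊗[k] N →ₗ[k] N ⊗[k] M :=
  map YN.mu.toLinearMap (lift YM.twistAct)
    ∘ₗ (TensorProduct.assoc k N H M).toLinearMap
    ∘ₗ (TensorProduct.comm k M (N ⊗[k] H)).toLinearMap ∘ₗ YN.coact.lTensor M

def braidingInv : N ⊗[k] M →ₗ[k] M ⊗[k] N :=
  (TensorProduct.comm k N M).toLinearMap
    ∘ₗ map YN.mu.toLinearMap (lift (YM.twistAct ∘ₗ HH.S.toLinearMap))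
    ∘ₗ (TensorProduct.assoc k N H M).toLinearMap ∘ₗ YN.coact.rTensor M

theorem braiding_tmul (m : M) (x : N) :
    braiding YM YN (m ⊗ₜ x) = map YN.mu.toLinearMap (YM.twistAct.flip m) (YN.coact x) := by
  simp only [braiding, LinearMap.comp_apply, LinearMap.lTensor_tmul, LinearEquiv.coe_coe,
    comm_tmul]
  induction YN.coact x using TensorProduct.induction_on with
  | zero => simp
  | tmul y h => simp
  | add s t hs ht => simp [add_tmul, hs, ht]

theorem braidingInv_tmul (x : N) (m : M) :
    braidingInv YM YN (x ⊗ₜ m) = TensorProduct.comm k N M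
      (map YN.mu.toLinearMap ((YM.twistAct ∘ₗ HH.S.toLinearMap).flip m) (YN.coact x)) := by
  simp only [braidingInv, LinearMap.comp_apply, LinearMap.rTensor_tmul, LinearEquiv.coe_coe]
  induction YN.coact x using TensorProduct.induction_on with
  | zero => simp
  | tmul y h => simp
  | add s t hs ht => simp [add_tmul, hs, ht]

theorem braidingInv_comp_braiding (hB : IsHomHopfAuto HH B) :
    braidingInv YM YN ∘ₗ braiding YM YN = LinearMap.id := by
  refine ext' fun m x => ?_
  -- `Φ (y ⊗ g ⊗ h) = (S(g) h) ▷ m ⊗ ν²(y)`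
  let Φ : N ⊗[k] (H ⊗[k] H) →ₗ[k] M ⊗[k] N :=
    (TensorProduct.comm k N M).toLinearMap ∘ₗ map (YN.mu.toLinearMap ∘ₗ YN.mu.toLinearMap)
      (YM.twistAct.flip m ∘ₗ lift HH.mul ∘ₗ map HH.S.toLinearMap LinearMap.id)
  have hstep : ∀ t, braidingInv YM YN (map YN.mu.toLinearMap (YM.twistAct.flip m) t)
      = Φ (TensorProduct.assoc k N H H (map YN.coact HH.a.symm.toLinearMap t)) := by
    intro t
    induction t using TensorProduct.induction_on with
    | zero => simp
    | add s t hs ht => simp only [map_add, hs, ht]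
    | tmul y h =>
      simp only [map_tmul, LinearEquiv.coe_coe, braidingInv_tmul, YN.coact_mu]
      induction YN.coact y using TensorProduct.induction_on with
      | zero => simp
      | add s t hs ht => simp only [map_add, add_tmul, hs, ht]
      | tmul y' g => simp [Φ, HH.S_a, twistAct_a_twistAct YM hB]
  have hcounit : ∀ y h, Φ (y ⊗ₜ HH.comul h)
      = HH.counit h •
          (TensorProduct.mk k M N m ∘ₗ YN.mu.toLinearMap ∘ₗ YN.mu.toLinearMap) y := by
    intro y h
    simp [Φ, HH.antipode_left, twistAct_one YM hB, smul_tmul']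
  simp [braiding_tmul, hstep, apply_assoc_map_coact_coact YN Φ _ hcounit]

theorem braiding_comp_braidingInv (hB : IsHomHopfAuto HH B) :
    braiding YM YN ∘ₗ braidingInv YM YN = LinearMap.id := by
  refine ext' fun x m => ?_
  -- `Φ (y ⊗ g ⊗ h) = ν²(y) ⊗ (g S(h)) ▷ m`
  let Φ : N ⊗[k] (H ⊗[k] H) →ₗ[k] N ⊗[k] M :=
    map (YN.mu.toLinearMap ∘ₗ YN.mu.toLinearMap)
      (YM.twistAct.flip m ∘ₗ lift HH.mul ∘ₗ map LinearMap.id HH.S.toLinearMap)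
  have hstep : ∀ t, braiding YM YN (TensorProduct.comm k N M
      (map YN.mu.toLinearMap ((YM.twistAct ∘ₗ HH.S.toLinearMap).flip m) t))
      = Φ (TensorProduct.assoc k N H H (map YN.coact HH.a.symm.toLinearMap t)) := by
    intro t
    induction t using TensorProduct.induction_on with
    | zero => simp
    | add s t hs ht => simp only [map_add, hs, ht]
    | tmul y h =>
      simp only [map_tmul, LinearEquiv.coe_coe, comm_tmul, braiding_tmul, YN.coact_mu]
      induction YN.coact y using TensorProduct.induction_on with
      | zero => simp
      | add s t hs ht => simp only [map_add, add_tmul, hs, ht]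
      | tmul y' g => simp [Φ, HH.S_a_symm_s13, twistAct_a_twistAct YM hB]
  have hcounit : ∀ y h, Φ (y ⊗ₜ HH.comul h)
      = HH.counit h •
          ((TensorProduct.mk k N M).flip m ∘ₗ YN.mu.toLinearMap ∘ₗ YN.mu.toLinearMap) y := by
    intro y h
    simp [Φ, HH.antipode_right, twistAct_one YM hB, smul_tmul']
  simp [braidingInv_tmul, hstep, apply_assoc_map_coact_coact YN Φ _ hcounit]

end YDModule

end

theorem stmt_13_general {k : Type*} [Field k] {H : Type*} [AddCommGroup H] [Module k H]
    {M : Type*} [AddCommGroup M] [Module k M] {N : Type*} [AddCommGroup N] [Module k N]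
    (HH : HomHopf k H) (A B C D : H ≃ₗ[k] H)
    (hB : IsHomHopfAuto HH B)
    (YM : YDModule HH A B M) (YN : YDModule HH C D N)
    (c : (M ⊗[k] N) →ₗ[k] (N ⊗[k] M))
    (hc : ∀ (m : M) (x : N) (q : ℕ) (n0 : Fin q → N) (n1 : Fin q → H),
      YN.coact x = ∑ l, n0 l ⊗ₜ[k] n1 l →
      c (m ⊗ₜ[k] x) = ∑ l, YN.mu (n0 l) ⊗ₜ[k] YM.act (B.symm (n1 l)) (YM.mu.symm m))
    (d : (N ⊗[k] M) →ₗ[k] (M ⊗[k] N))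
    (hd : ∀ (x : N) (m : M) (q : ℕ) (n0 : Fin q → N) (n1 : Fin q → H),
      YN.coact x = ∑ l, n0 l ⊗ₜ[k] n1 l →
      d (x ⊗ₜ[k] m)
        = ∑ l, YM.act (B.symm (HH.S (n1 l))) (YM.mu.symm m) ⊗ₜ[k] YN.mu (n0 l)) :
    Function.Bijective c ∧ (∀ z : M ⊗[k] N, d (c z) = z) ∧
      (∀ w : N ⊗[k] M, c (d w) = w) := by
  have hc_eq : c = YM.braiding YN := TensorProduct.ext' fun m x => by
    obtain ⟨q, n0, n1, hrep⟩ := TensorProduct.exists_fin_sum_tmul (YN.coact x)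
    simp [hc m x q n0 n1 hrep, YDModule.braiding_tmul, hrep, YDModule.twistAct_apply]
  have hd_eq : d = YM.braidingInv YN := TensorProduct.ext' fun x m => by
    obtain ⟨q, n0, n1, hrep⟩ := TensorProduct.exists_fin_sum_tmul (YN.coact x)
    simp [hd x m q n0 n1 hrep, YDModule.braidingInv_tmul, hrep, YDModule.twistAct_apply]
  subst hc_eq hd_eq
  have hdc : Function.LeftInverse (YM.braidingInv YN) (YM.braiding YN) :=
    LinearMap.congr_fun (YM.braidingInv_comp_braiding YN hB)
  have hcd : Function.RightInverse (YM.braidingInv YN) (YM.braiding YN) :=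
    LinearMap.congr_fun (YM.braiding_comp_braidingInv YN hB)
  exact ⟨⟨hdc.injective, hcd.surjective⟩, hdc, hcd⟩

/-- Lemma 3.6: the braiding c_{M,N}(m⊗n) = ν(n₍₀₎) ⊗ B⁻¹(n₍₁₎)·μ⁻¹(m) is bijective,
with inverse c⁻¹(n⊗m) = B⁻¹(S(n₍₁₎))·μ⁻¹(m) ⊗ ν(n₍₀₎). -/
theorem stmt_13 {k : Type*} [Field k] {H : Type*} [AddCommGroup H] [Module k H]
    {M : Type*} [AddCommGroup M] [Module k M] {N : Type*} [AddCommGroup N] [Module k N]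
    (HH : HomHopf k H) (A B C D : H ≃ₗ[k] H)
    (hA : IsHomHopfAuto HH A) (hB : IsHomHopfAuto HH B)
    (hC : IsHomHopfAuto HH C) (hD : IsHomHopfAuto HH D)
    (YM : YDModule HH A B M) (YN : YDModule HH C D N)
    (c : (M ⊗[k] N) →ₗ[k] (N ⊗[k] M))
    (hc : ∀ (m : M) (x : N) (q : ℕ) (n0 : Fin q → N) (n1 : Fin q → H),
      YN.coact x = ∑ l, n0 l ⊗ₜ[k] n1 l →
      c (m ⊗ₜ[k] x) = ∑ l, YN.mu (n0 l) ⊗ₜ[k] YM.act (B.symm (n1 l)) (YM.mu.symm m))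
    (d : (N ⊗[k] M) →ₗ[k] (M ⊗[k] N))
    (hd : ∀ (x : N) (m : M) (q : ℕ) (n0 : Fin q → N) (n1 : Fin q → H),
      YN.coact x = ∑ l, n0 l ⊗ₜ[k] n1 l →
      d (x ⊗ₜ[k] m)
        = ∑ l, YM.act (B.symm (HH.S (n1 l))) (YM.mu.symm m) ⊗ₜ[k] YN.mu (n0 l)) :
    Function.Bijective c ∧ (∀ z : M ⊗[k] N, d (c z) = z) ∧
      (∀ w : N ⊗[k] M, c (d w) = w) :=
  stmt_13_general HH A B C D hB YM YN c hc d hd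
end
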